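/- (Convergence of the smoother in the stiff limit.) Assume Q_Δ and A are invertible and (I_M − Q_Δ^{-1} Q)^M = 0 (as holds for the LU-trick preconditioner). Then for every integer k ≥ M there exist constants c > 0 (depending on k) and μ* > 0 such that for all μ > μ*, the preconditioner P̂(μ) is invertible and ρ( T_S(μ)^k ) ≤ c / μ. -/

import Mathlib

/-!
STATEMENT 11 (Convergence of the smoother in the stiff limit): Assume Q_Δ and A
are invertible and (I_M − Q_Δ⁻¹ Q)^M = 0. Then for every k ≥ M there exist c > 0
and μ* > 0 such that for all μ > μ*, P̂(μ) is invertible and ρ(T_S(μ)^k) ≤ c / μ.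
-/

noncomputable section

open Matrix
open scoped Kronecker

/-- Complexification of a real matrix. -/
def cmplx {m n : Type*} (A : Matrix m n ℝ) : Matrix m n ℂ := A.map (fun x => (x : ℂ))

/-- The matrix `E` with ones on the first subdiagonal and zeros elsewhere. -/
def Emat (L : ℕ) : Matrix (Fin L) (Fin L) ℂ :=
  Matrix.of fun i j => if (i : ℕ) = (j : ℕ) + 1 then 1 else 0

/-- The matrix `N_M` whose last column consists of ones, all other entries zero. -/
def Nmat (M : ℕ) : Matrix (Fin M) (Fin M) ℂ :=
  Matrix.of fun _ j => if (j : ℕ) = M - 1 then 1 else 0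

/-- `H = N_M ⊗ I_N`. -/
def Hmat (M N : ℕ) : Matrix (Fin M × Fin N) (Fin M × Fin N) ℂ :=
  Nmat M ⊗ₖ (1 : Matrix (Fin N) (Fin N) ℂ)

/-- `E ⊗ H`. -/
def EH (L M N : ℕ) : Matrix (Fin L × Fin M × Fin N) (Fin L × Fin M × Fin N) ℂ :=
  Emat L ⊗ₖ Hmat M N

/-- The composite collocation matrix `C(μ) = I − μ (I_L ⊗ Q ⊗ A) − E ⊗ H`. -/
def Cmat (L : ℕ) {M N : ℕ} (Q : Matrix (Fin M) (Fin M) ℝ) (A : Matrix (Fin N) (Fin N) ℂ)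
    (μ : ℝ) : Matrix (Fin L × Fin M × Fin N) (Fin L × Fin M × Fin N) ℂ :=
  1 - (μ : ℂ) • ((1 : Matrix (Fin L) (Fin L) ℂ) ⊗ₖ (cmplx Q ⊗ₖ A)) - EH L M N

/-- The approximative block Jacobi preconditioner `P̂(μ) = I − μ (I_L ⊗ Q_Δ ⊗ A)`. -/
def Phat (L : ℕ) {M N : ℕ} (QΔ : Matrix (Fin M) (Fin M) ℝ) (A : Matrix (Fin N) (Fin N) ℂ)
    (μ : ℝ) : Matrix (Fin L × Fin M × Fin N) (Fin L × Fin M × Fin N) ℂ :=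
  1 - (μ : ℂ) • ((1 : Matrix (Fin L) (Fin L) ℂ) ⊗ₖ (cmplx QΔ ⊗ₖ A))

/-- The smoother iteration matrix `T_S(μ) = I − P̂(μ)⁻¹ C(μ)`. -/
def Tsmooth (L : ℕ) {M N : ℕ} (Q QΔ : Matrix (Fin M) (Fin M) ℝ)
    (A : Matrix (Fin N) (Fin N) ℂ) (μ : ℝ) :
    Matrix (Fin L × Fin M × Fin N) (Fin L × Fin M × Fin N) ℂ :=
  1 - (Phat L QΔ A μ)⁻¹ * Cmat L Q A μ

/-!
Since `Q_Δ (I − Q_Δ⁻¹ Q) = Q_Δ − Q`, the collocation matrix splits as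
`C(μ) = P̂(μ) (I − S) + (S − E ⊗ H)` with `S = I_L ⊗ (I_M − Q_Δ⁻¹ Q) ⊗ I_N`,
so that `T_S(μ) = S + P̂(μ)⁻¹ (E ⊗ H − S)`. As `μ → ∞`, `P̂(μ)/μ` tends to the
invertible matrix `−I_L ⊗ Q_Δ ⊗ A`, hence `P̂(μ)⁻¹ = O(1/μ)`. Since `S^k = 0` for
`k ≥ M`, `T_S(μ)^k = (S + O(1/μ))^k − S^k = O(1/μ)` in norm, and the spectral radius
is dominated by the norm.
-/

open Filter Asymptotics Topology

theorem Matrix.kronecker_pow {R m n : Type*} [CommSemiring R] [Fintype m] [Fintype n]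
    [DecidableEq m] [DecidableEq n] (A : Matrix m m R) (B : Matrix n n R) (k : ℕ) :
    (A ⊗ₖ B) ^ k = (A ^ k) ⊗ₖ (B ^ k) := by
  induction k with
  | zero => simp
  | succ k ih => rw [pow_succ, pow_succ, pow_succ, ih, mul_kronecker_mul]

section
variable {α R : Type*} [NormedRing R] {l : Filter α}

theorem isBigO_add_pow_sub_pow (S : R) {T : α → R} (hT : T =O[l] fun _ => (1 : ℝ)) (n : ℕ) :
    (fun x => (S + T x) ^ n - S ^ n) =O[l] T := by
  induction n with
  | zero => simpa using isBigO_zero T l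
  | succ n ih =>
    have hT' : (fun x => ‖T x‖) =O[l] T := isBigO_norm_left.mpr (isBigO_refl T l)
    have hST : (fun x => S + T x) =O[l] fun _ => (1 : ℝ) :=
      (isBigO_const_const S one_ne_zero l).add hT
    have key : ∀ x, (S + T x) ^ (n + 1) - S ^ (n + 1)
        = (S + T x) * ((S + T x) ^ n - S ^ n) + T x * S ^ n := fun x => by
      rw [pow_succ' (S + T x), pow_succ' S]; noncomm_ring
    simp only [key]
    refine IsBigO.add ?_ ?_
    · exact (hST.mul ih.norm_right).trans (by simpa using hT')
    · exact ((isBigO_refl T l).norm_right.mul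
        (isBigO_const_const (S ^ n) one_ne_zero l)).trans (by simpa using hT')
end

section
variable {R : Type*} [NormedRing R] [NormedAlgebra ℝ R]

theorem tendsto_inv_smul_one_sub_atTop (b : R) :
    Tendsto (fun μ : ℝ => μ⁻¹ • (1 : R) - b) atTop (𝓝 (-b)) := by
  simpa using ((tendsto_inv_atTop_zero (𝕜 := ℝ)).smul_const (1 : R)).sub_const b

variable [HasSummableGeomSeries R] {b : R}

theorem eventually_isUnit_one_sub_smul (hb : IsUnit b) :
    ∀ᶠ μ : ℝ in atTop, IsUnit (1 - μ • b) := by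
  filter_upwards [(tendsto_inv_smul_one_sub_atTop b).eventually (Units.isOpen.mem_nhds hb.neg),
    eventually_gt_atTop 0] with μ hμ hμ0
  convert hμ.smul (Units.mk0 μ hμ0.ne')
  simp [Units.smul_def, smul_sub, smul_smul, hμ0.ne']

theorem isBigO_inverse_one_sub_smul (hb : IsUnit b) :
    (fun μ : ℝ => Ring.inverse (1 - μ • b)) =O[atTop] fun μ => μ⁻¹ := by
  have hres : Tendsto (fun μ : ℝ => Ring.inverse (μ⁻¹ • (1 : R) - b)) atTop
      (𝓝 (Ring.inverse (-b))) :=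
    (NormedRing.inverse_continuousAt hb.neg.unit).tendsto.comp (tendsto_inv_smul_one_sub_atTop b)
  have heq : ∀ᶠ μ : ℝ in atTop,
      μ⁻¹ • Ring.inverse (μ⁻¹ • (1 : R) - b) = Ring.inverse (1 - μ • b) := by
    filter_upwards [eventually_gt_atTop 0] with μ hμ
    have := spectrum.units_smul_resolvent_self (r := Units.mk0 μ⁻¹ (by positivity)) (a := b)
    simp only [Units.smul_def, Units.val_inv_eq_inv_val, Units.val_mk0, inv_inv] at this
    simpa [resolvent, Algebra.algebraMap_eq_smul_one] using this
  exact ((isBigO_refl (fun μ : ℝ => μ⁻¹) atTop).smul (hres.isBigO_one ℝ)).congr' heq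
    (by simp)
end

theorem spectralRadius_le_ofReal_norm_mul_norm_one {𝕜 A : Type*} [NormedField 𝕜]
    [NormedRing A] [NormedAlgebra 𝕜 A] [CompleteSpace A] (a : A) :
    spectralRadius 𝕜 a ≤ ENNReal.ofReal (‖(1 : A)‖ * ‖a‖) := by
  refine iSup₂_le fun k hk => ?_
  rw [mul_comm, ← ENNReal.ofReal_coe_nnreal]
  exact ENNReal.ofReal_le_ofReal (spectrum.norm_le_norm_mul_of_mem hk)

theorem cmplx_eq_mapMatrix {n : Type*} [Fintype n] [DecidableEq n] (A : Matrix n n ℝ) :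
    cmplx A = Complex.ofRealHom.mapMatrix A := rfl

-- The limit of `Tsmooth L Q QΔ A μ` as `μ → ∞`.
def stiffLimit (L : ℕ) {M : ℕ} (N : ℕ) (Q QΔ : Matrix (Fin M) (Fin M) ℝ) :
    Matrix (Fin L × Fin M × Fin N) (Fin L × Fin M × Fin N) ℂ :=
  1 ⊗ₖ (cmplx (1 - QΔ⁻¹ * Q) ⊗ₖ 1)

section
variable {L M N : ℕ} {Q QΔ : Matrix (Fin M) (Fin M) ℝ} {A : Matrix (Fin N) (Fin N) ℂ}

theorem stiffLimit_pow_eq_zero (hnil : (1 - QΔ⁻¹ * Q) ^ M = 0) {k : ℕ} (hk : M ≤ k) :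
    stiffLimit L N Q QΔ ^ k = 0 := by
  rw [stiffLimit, Matrix.kronecker_pow, Matrix.kronecker_pow, cmplx_eq_mapMatrix, ← map_pow,
    pow_eq_zero_of_le hk hnil, map_zero, zero_kronecker, kronecker_zero]

theorem Phat_eq_one_sub_smul (μ : ℝ) :
    Phat L QΔ A μ = 1 - μ • ((1 : Matrix (Fin L) (Fin L) ℂ) ⊗ₖ (cmplx QΔ ⊗ₖ A)) :=
  by rw [Phat, Complex.coe_smul]

theorem Cmat_eq_Phat_mul_add (hQΔ : IsUnit QΔ) (μ : ℝ) :
    Cmat L Q A μ =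
      Phat L QΔ A μ * (1 - stiffLimit L N Q QΔ) + (stiffLimit L N Q QΔ - EH L M N) := by
  have hQ : cmplx QΔ * cmplx (1 - QΔ⁻¹ * Q) + cmplx Q = cmplx QΔ := by
    simp only [cmplx_eq_mapMatrix]
    rw [← map_mul, ← map_add, mul_sub, mul_one,
      mul_nonsing_inv_cancel_left _ _ ((isUnit_iff_isUnit_det _).1 hQΔ),
      sub_add_cancel]
  have hS : (1 : Matrix (Fin L) (Fin L) ℂ) ⊗ₖ (cmplx QΔ ⊗ₖ A) * stiffLimit L N Q QΔ
      + 1 ⊗ₖ (cmplx Q ⊗ₖ A) = 1 ⊗ₖ (cmplx QΔ ⊗ₖ A) := by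
    rw [stiffLimit, ← mul_kronecker_mul, ← mul_kronecker_mul, one_mul, mul_one,
      ← kronecker_add, ← add_kronecker, hQ]
  rw [Cmat, Phat, eq_sub_of_add_eq' hS, sub_mul, one_mul, Matrix.smul_mul, mul_sub, mul_one]
  module

theorem Tsmooth_eq_stiffLimit_add (hQΔ : IsUnit QΔ) {μ : ℝ} (hP : IsUnit (Phat L QΔ A μ)) :
    Tsmooth L Q QΔ A μ =
      stiffLimit L N Q QΔ + (Phat L QΔ A μ)⁻¹ * (EH L M N - stiffLimit L N Q QΔ) := by
  rw [Tsmooth, Cmat_eq_Phat_mul_add hQΔ, mul_add, ← mul_assoc,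
    nonsing_inv_mul _ ((isUnit_iff_isUnit_det _).1 hP), one_mul, ← neg_sub (EH L M N), mul_neg]
  abel

end

-- An auxiliary Banach-algebra structure; the statement itself involves no norm.
attribute [local instance] Matrix.linftyOpNormedRing Matrix.linftyOpNormedAlgebra

theorem stmt_11_general (L M N : ℕ)
    (Q QΔ : Matrix (Fin M) (Fin M) ℝ) (A : Matrix (Fin N) (Fin N) ℂ)
    (hQΔ : IsUnit QΔ) (hA : IsUnit A)
    (hnil : ((1 : Matrix (Fin M) (Fin M) ℝ) - QΔ⁻¹ * Q) ^ M = 0)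
    (k : ℕ) (hk : M ≤ k) :
    ∃ c > (0 : ℝ), ∃ μs > (0 : ℝ), ∀ μ : ℝ, μs < μ →
      IsUnit (Phat L QΔ A μ) ∧
      spectralRadius ℂ ((Tsmooth L Q QΔ A μ) ^ k) ≤ ENNReal.ofReal (c / μ) := by
  set S := stiffLimit L N Q QΔ
  set B := (1 : Matrix (Fin L) (Fin L) ℂ) ⊗ₖ (cmplx QΔ ⊗ₖ A)
  have hB : IsUnit B :=
    isUnit_one.kronecker ((hQΔ.map Complex.ofRealHom.mapMatrix).kronecker hA)
  have hP : ∀ᶠ μ : ℝ in atTop, IsUnit (Phat L QΔ A μ) := by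
    simpa only [Phat_eq_one_sub_smul] using eventually_isUnit_one_sub_smul hB
  have hR : (fun μ : ℝ => (Phat L QΔ A μ)⁻¹ * (EH L M N - S)) =O[atTop] (·⁻¹) := by
    simp only [nonsing_inv_eq_ringInverse, Phat_eq_one_sub_smul]
    simpa using (isBigO_inverse_one_sub_smul hB).mul
      (isBigO_const_const (EH L M N - S) one_ne_zero atTop)
  have hT : (fun μ : ℝ => Tsmooth L Q QΔ A μ ^ k) =O[atTop] (·⁻¹) := by
    have hR1 := (hR.trans_tendsto tendsto_inv_atTop_zero).isBigO_one ℝ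
    refine ((isBigO_add_pow_sub_pow S hR1 k).trans hR).congr' ?_ EventuallyEq.rfl
    filter_upwards [hP] with μ hμ
    rw [Tsmooth_eq_stiffLimit_add hQΔ hμ, stiffLimit_pow_eq_zero hnil hk, sub_zero]
  obtain ⟨c, hc, hcT⟩ := (hT.norm_left.const_mul_left
    ‖(1 : Matrix (Fin L × Fin M × Fin N) (Fin L × Fin M × Fin N) ℂ)‖).exists_pos
  obtain ⟨μ₀, hμ₀⟩ := eventually_atTop.1 (hP.and hcT.bound)
  refine ⟨c, hc, max μ₀ 1, by positivity, fun μ hμ => ?_⟩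
  have hμ0 : 0 < μ := (zero_lt_one.trans_le (le_max_right μ₀ 1)).trans hμ
  obtain ⟨hPμ, hbound⟩ := hμ₀ μ (le_max_left μ₀ 1 |>.trans hμ.le)
  refine ⟨hPμ, (spectralRadius_le_ofReal_norm_mul_norm_one _).trans
    (ENNReal.ofReal_le_ofReal ?_)⟩
  simpa [abs_of_pos hμ0, div_eq_mul_inv] using hbound

theorem stmt_11 (L M N : ℕ) (hL : 0 < L) (hM : 0 < M) (hN : 0 < N)
    (Q QΔ : Matrix (Fin M) (Fin M) ℝ) (A : Matrix (Fin N) (Fin N) ℂ)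
    (hQΔ : IsUnit QΔ) (hA : IsUnit A)
    (hnil : ((1 : Matrix (Fin M) (Fin M) ℝ) - QΔ⁻¹ * Q) ^ M = 0)
    (k : ℕ) (hk : M ≤ k) :
    ∃ c > (0 : ℝ), ∃ μs > (0 : ℝ), ∀ μ : ℝ, μs < μ →
      IsUnit (Phat L QΔ A μ) ∧
      spectralRadius ℂ ((Tsmooth L Q QΔ A μ) ^ k) ≤ ENNReal.ofReal (c / μ) :=
  stmt_11_general L M N Q QΔ A hQΔ hA hnil k hk
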